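/- Let R be a commutative local ring, ℓ a natural number, and M a finite free R-module of rank 2ℓ. Let q be a quadratic form on M that is regular, in the sense that its polar form b_q induces a linear isomorphism from M onto the dual module Hom_R(M, R). Let N ⊆ M be a totally isotropic submodule which is a direct summand of M and is free of rank ℓ. Then N equals its own orthogonal N^⊥ = {m ∈ M : b_q(m, n) = 0 for all n ∈ N}, and consequently N is a maximal totally isotropic submodule: every totally isotropic submodule N′ of M with N ⊆ N′ satisfies N′ = N. -/

import Mathlib

/-- The orthogonal of a submodule `N` with respect to the polar form of a quadratic form:
all `m` with `b_q(m, n) = 0` for every `n ∈ N`. -/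
def qOrthogonal {R M : Type*} [CommRing R] [AddCommGroup M] [Module R M]
    (q : QuadraticForm R M) (N : Submodule R M) : Submodule R M where
  carrier := {m | ∀ n ∈ N, QuadraticMap.polar q m n = 0}
  zero_mem' := fun n _hn => by simp [QuadraticMap.polar_zero_left]
  add_mem' := by
    intro a b ha hb n hn
    rw [QuadraticMap.polar_add_left, ha n hn, hb n hn, add_zero]
  smul_mem' := by
    intro c x hx n hn
    rw [QuadraticMap.polar_smul_left, hx n hn, smul_zero]

/-- In a regular quadratic module of rank `2ℓ` over a local ring, a totally isotropic free
direct summand of rank `ℓ` equals its own orthogonal, and hence is a maximal totally isotropic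
submodule. -/
theorem isotropic_rank_summand_eq_orthogonal_of_regular
    {R M : Type*} [CommRing R] [IsLocalRing R] [AddCommGroup M] [Module R M]
    [Module.Free R M] [Module.Finite R M] (ℓ : ℕ)
    (hM : Module.finrank R M = 2 * ℓ)
    (q : QuadraticForm R M)
    (hreg : Function.Bijective (QuadraticMap.polarBilin q))
    (N : Submodule R M) (hiso : ∀ v ∈ N, q v = 0)
    (hsummand : ∃ N' : Submodule R M, IsCompl N N')
    (hfree : Module.Free R ↥N) (hrank : Module.finrank R ↥N = ℓ) :
    N = qOrthogonal q N ∧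
      ∀ N' : Submodule R M, (∀ v ∈ N', q v = 0) → N ≤ N' → N' = N := by
  haveI := hfree
  obtain ⟨P, hcompl⟩ := hsummand
  -- polar form vanishes on pairs from an isotropic submodule
  have hpolar : ∀ (N' : Submodule R M), (∀ v ∈ N', q v = 0) →
      ∀ v ∈ N', ∀ n ∈ N', QuadraticMap.polar q v n = 0 := by
    intro N' hN' v hv n hn
    rw [QuadraticMap.polar, hN' v hv, hN' n hn, hN' _ (add_mem hv hn)]
    ring
  -- the projections associated to the splitting
  let πN : M →ₗ[R] N := N.projectionOnto P hcompl
  let πP : M →ₗ[R] P := P.projectionOnto N hcompl.symm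
  -- N and P are finite
  haveI : Module.Finite R N := Module.Finite.of_surjective πN
    (fun x => ⟨x, Submodule.projectionOnto_apply_left hcompl x⟩)
  haveI : Module.Finite R P := Module.Finite.of_surjective πP
    (fun x => ⟨x, Submodule.projectionOnto_apply_left hcompl.symm x⟩)
  -- P is projective, hence free over the local ring
  haveI : Module.Projective R P := Module.Projective.of_split P.subtype πP (by
    ext x; simp [πP])
  haveI : Module.FinitePresentation R P := Module.finitePresentation_of_projective R P
  haveI : Module.Free R P := Module.free_of_flat_of_isLocalRing
  -- rank of P is ℓ
  have hrankP : Module.finrank R P = ℓ := by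
    have := Module.finrank_prod (R := R) (M := N) (M' := P)
    rw [(Submodule.prodEquivOfIsCompl N P hcompl).finrank_eq, hM, hrank] at this
    omega
  -- the map f : M → Dual R N, m ↦ (n ↦ polar q m n)
  let f : M →ₗ[R] Module.Dual R N := N.subtype.dualMap ∘ₗ (QuadraticMap.polarBilin q)
  have hf_apply : ∀ (m : M) (n : N), f m n = QuadraticMap.polar q m (n : M) := by
    intro m n; rfl
  -- f vanishes on N
  have hfN : ∀ v ∈ N, f v = 0 := by
    intro v hv
    ext n
    rw [hf_apply]
    exact hpolar N hiso v hv n n.2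
  -- f is surjective
  have hfsurj : Function.Surjective f := by
    intro φ
    obtain ⟨m, hm⟩ := hreg.2 (φ ∘ₗ πN)
    refine ⟨m, ?_⟩
    ext n
    rw [hf_apply, ← QuadraticMap.polarBilin_apply_apply, hm]
    simp [πN, Submodule.projectionOnto_apply_left hcompl n]
  -- f restricted to P is surjective
  have hfPsurj : Function.Surjective (f ∘ₗ P.subtype) := by
    intro φ
    obtain ⟨m, hm⟩ := hfsurj φ
    obtain ⟨u, v, huv, -⟩ := Submodule.existsUnique_add_of_isCompl hcompl m
    refine ⟨v, ?_⟩
    have : f ((u : M) + (v : M)) = φ := by rw [huv, hm]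
    rw [map_add, hfN u u.2, zero_add] at this
    simpa using this
  -- Dual R N is free of rank ℓ, so pick an equivalence Dual R N ≃ P
  let bN := Module.Free.chooseBasis R N
  let bP := Module.Free.chooseBasis R P
  have hcard : Fintype.card (Module.Free.ChooseBasisIndex R N) =
      Fintype.card (Module.Free.ChooseBasisIndex R P) := by
    rw [← Module.finrank_eq_card_chooseBasisIndex, ← Module.finrank_eq_card_chooseBasisIndex,
      hrank, hrankP]
  let e : Module.Dual R N ≃ₗ[R] P := bN.dualBasis.equiv bP (Fintype.equivOfCardEq hcard)
  -- the endomorphism of P, surjective hence injective by the Orzech property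
  let g : P →ₗ[R] P := e.toLinearMap ∘ₗ f ∘ₗ P.subtype
  have hgsurj : Function.Surjective g := by
    intro x
    obtain ⟨y, hy⟩ := hfPsurj (e.symm x)
    refine ⟨y, ?_⟩
    have hy' : f (y : M) = e.symm x := hy
    simp [g, hy']
  have hginj : Function.Injective g :=
    OrzechProperty.injective_of_surjective_endomorphism g hgsurj
  -- hence f is injective on P, so the orthogonal of N is contained in N
  have hkey : N = qOrthogonal q N := by
    refine le_antisymm ?_ ?_
    · intro v hv n hn
      exact hpolar N hiso v hv n hn
    · intro m hm
      have hfm : f m = 0 := by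
        ext n
        rw [hf_apply]
        exact hm n n.2
      obtain ⟨u, v, huv, -⟩ := Submodule.existsUnique_add_of_isCompl hcompl m
      have hfv : f v = 0 := by
        have : f ((u : M) + (v : M)) = 0 := by rw [huv, hfm]
        rwa [map_add, hfN u u.2, zero_add] at this
      have : g v = g 0 := by simpa [g] using congrArg e hfv
      have hv0 : v = 0 := hginj this
      rw [← huv, hv0]
      simpa using u.2
  refine ⟨hkey, ?_⟩
  intro N' hN' hNN'
  refine le_antisymm ?_ hNN'
  intro v hv
  rw [hkey]
  intro n hn
  exact hpolar N' hN' v hv n (hNN' hn)
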